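/- arXiv:cs/0207050 — 2 statements merged into one kernel-verified Lean document; each statement's English description precedes it below -/
import Mathlib

section
/- Chaotic iteration confluence: the limit ⋂_{i∈ℕ} d^i of every chaotic iteration of a finite set F of monotonic operators from d ⊆ D equals the downward closure CL↓(d,F). (A chaotic iteration is one where every f ∈ F appears infinitely often in the sequence f¹, f², ….) -/
/-!
The iterates `d⁰ ⊇ d¹ ⊇ ⋯` form a decreasing chain in the finite lattice `𝒫(D)`, so from some
stage on they all equal their limit `L`. Each `f ∈ F` is applied after that stage, where the step
`L = L ∩ f L` gives `L ⊆ f L`; hence `L ⊆ CL↓(d, F)`. Conversely, a set `e ⊆ d` with `e ⊆ f e` for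
all `f ∈ F` survives every step `dⁱ⁺¹ = dⁱ ∩ fⁱ⁺¹(dⁱ)` by monotonicity, so it lies in `L`.
-/

def CL {α : Type*} (d : Set α) (F : Set (Set α → Set α)) : Set α :=
  ⋃₀ {e | e ⊆ d ∧ ∀ f ∈ F, e ⊆ f e}

theorem Antitone.exists_forall_ge_eq_iInf {β : Type*} [CompleteLattice β] [WellFoundedLT β]
    {s : ℕ → β} (hs : Antitone s) : ∃ N, ∀ n, N ≤ n → s n = ⨅ i, s i := by
  obtain ⟨N, hN⟩ := WellFoundedLT.antitone_chain_condition hs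
  refine ⟨N, fun n hn => le_antisymm (le_iInf fun i => ?_) (iInf_le s n)⟩
  rcases le_total i n with hin | hni
  · exact hs hin
  · rw [← hN n hn, hN i (hn.trans hni)]

section ChaoticIteration

variable {α : Type*} {d : Set α} {F : Set (Set α → Set α)} {fs : ℕ → Set α → Set α}
  {dseq : ℕ → Set α}

theorem antitone_of_step (hstep : ∀ i, dseq (i + 1) = dseq i ∩ fs (i + 1) (dseq i)) :
    Antitone dseq :=
  antitone_nat_of_succ_le fun i => (hstep i).trans_subset Set.inter_subset_left

theorem subset_CL {e : Set α} (hed : e ⊆ d) (hef : ∀ f ∈ F, e ⊆ f e) : e ⊆ CL d F :=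
  Set.subset_sUnion_of_mem ⟨hed, hef⟩

theorem CL_subset_iInter_of_step (hF : ∀ f ∈ F, Monotone f) (hfs : ∀ i, 1 ≤ i → fs i ∈ F)
    (h0 : dseq 0 = d) (hstep : ∀ i, dseq (i + 1) = dseq i ∩ fs (i + 1) (dseq i)) :
    CL d F ⊆ ⋂ i, dseq i := by
  refine Set.sUnion_subset fun e ⟨hed, hef⟩ => Set.subset_iInter fun i => ?_
  induction i with
  | zero => exact h0 ▸ hed
  | succ j ih =>
    have hfj : fs (j + 1) ∈ F := hfs (j + 1) j.succ_pos
    rw [hstep j]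
    exact Set.subset_inter ih ((hef _ hfj).trans (hF _ hfj ih))

theorem iInter_subset_apply_iInter_of_step [Finite α]
    (hstep : ∀ i, dseq (i + 1) = dseq i ∩ fs (i + 1) (dseq i)) {f : Set α → Set α}
    (hf : {i | fs i = f}.Infinite) : ⋂ i, dseq i ⊆ f (⋂ i, dseq i) := by
  obtain ⟨N, hN⟩ := (antitone_of_step hstep).exists_forall_ge_eq_iInf
  obtain ⟨i, hfi, hNi⟩ := hf.exists_gt N
  obtain ⟨j, rfl⟩ : ∃ j, i = j + 1 := Nat.exists_eq_add_one.mpr (N.zero_le.trans_lt hNi)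
  have hlim := hstep j
  rw [hN (j + 1) hNi.le, hN j (Nat.le_of_lt_succ hNi), hfi] at hlim
  exact hlim.trans_subset Set.inter_subset_right

end ChaoticIteration

theorem chaotic_iteration_confluence_general {α : Type*} [Finite α]
    (d : Set α) (F : Set (Set α → Set α))
    (hF : ∀ f ∈ F, Monotone f)
    (fs : ℕ → (Set α → Set α)) (hfs : ∀ i, 1 ≤ i → fs i ∈ F)
    (hchaotic : ∀ f ∈ F, {i : ℕ | fs i = f}.Infinite)
    (dseq : ℕ → Set α) (h0 : dseq 0 = d)
    (hstep : ∀ i, dseq (i + 1) = dseq i ∩ fs (i + 1) (dseq i)) :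
    ⋂ i, dseq i = CL d F := by
  refine subset_antisymm (subset_CL ?_ fun f hf => ?_) (CL_subset_iInter_of_step hF hfs h0 hstep)
  · exact h0 ▸ Set.iInter_subset dseq 0
  · exact iInter_subset_apply_iInter_of_step hstep (hchaotic f hf)

theorem chaotic_iteration_confluence {α : Type*} [Finite α]
    (d : Set α) (F : Set (Set α → Set α)) (hFfin : F.Finite)
    (hF : ∀ f ∈ F, Monotone f)
    (fs : ℕ → (Set α → Set α)) (hfs : ∀ i, 1 ≤ i → fs i ∈ F)
    (hchaotic : ∀ f ∈ F, {i : ℕ | fs i = f}.Infinite)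
    (dseq : ℕ → Set α) (h0 : dseq 0 = d)
    (hstep : ∀ i, dseq (i + 1) = dseq i ∩ fs (i + 1) (dseq i)) :
    ⋂ i, dseq i = CL d F :=
  chaotic_iteration_confluence_general d F hF fs hfs hchaotic dseq h0 hstep
end

section
/- Soundness of explanation rules: if Γ ⊢ h is the root of a proof tree with respect to the rule system R_L ∪ R_R ∪ R_𝔻, then for all e ∈ Γ, h ∉ CL↓(e, L ∪ R). (Forward direction of the explanation theorem.) -/
/-- A judgment `Γ ⊢ h`. -/
abbrev Judgment (α : Type*) := Set (Set α) × α

/-- The rule system `R_L ∪ R_R ∪ R_𝔻` associated with local consistency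
operators `L` and restriction operators `R`. -/
def RuleSystem {α : Type*} (L R : Set (Set α → Set α)) :
    Set (List (Judgment α) × Judgment α) :=
  {rule |
    -- local consistency rules
    (∃ l ∈ L, ∃ (Γ : Set (Set α)) (hs : List α) (h : α),
      rule = (hs.map fun h' => (Γ, h'), (Γ, h)) ∧
      ∀ d : Set α, (∀ h' ∈ hs, h' ∉ d) → h ∉ l d) ∨
    -- restriction rules (facts)
    (∃ r ∈ R, ∃ (d : Set α) (h : α),
      rule = ([], ({d}, h)) ∧ h ∉ r Set.univ ∧ d ⊆ r Set.univ) ∨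
    -- labeling rules
    (∃ (h : α) (Γs : List (Set (Set α))), Γs ≠ [] ∧
      rule = (Γs.map fun Γ => (Γ, h), ({e | ∃ Γ ∈ Γs, e ∈ Γ}, h)))}

/-- Proof trees with respect to a rule system. -/
inductive Derives {α : Type*} (Rules : Set (List (Judgment α) × Judgment α)) :
    Judgment α → Prop
  | step (prems : List (Judgment α)) (concl : Judgment α)
      (hrule : (prems, concl) ∈ Rules)
      (hprems : ∀ j ∈ prems, Derives Rules j) : Derives Rules concl

theorem Derives.of_rules_preserve {α : Type*} {Rules : Set (List (Judgment α) × Judgment α)}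
    {P : Judgment α → Prop}
    (hP : ∀ prems concl, (prems, concl) ∈ Rules → (∀ j ∈ prems, P j) → P concl)
    {j : Judgment α} (hj : Derives Rules j) : P j := by
  induction hj with
  | step prems concl hrule _ ih => exact hP prems concl hrule ih

section Closure

variable {α : Type*} {d : Set α} {F : Set (Set α → Set α)} {f : Set α → Set α}

theorem CL_subset_apply_of_monotone (hf : Monotone f) (hfF : f ∈ F) : CL d F ⊆ f (CL d F) := by
  rintro x ⟨s, ⟨hsd, hs⟩, hxs⟩
  have hs_CL : s ⊆ CL d F := fun y hy => ⟨s, ⟨hsd, hs⟩, hy⟩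
  exact hf hs_CL (hs f hfF hxs)

theorem CL_subset_apply_univ_of_const (hf : ∀ e e' : Set α, f e = f e') (hfF : f ∈ F) :
    CL d F ⊆ f Set.univ := by
  rintro x ⟨s, ⟨-, hs⟩, hxs⟩
  exact hf s _ ▸ hs f hfF hxs

end Closure

section Soundness

variable {α : Type*} (L R : Set (Set α → Set α))

def ExplainsRemoval (j : Judgment α) : Prop :=
  ∀ e ∈ j.1, j.2 ∉ CL e (L ∪ R)

variable {L R}

theorem explainsRemoval_of_consistency_rule {l : Set α → Set α} (hl : Monotone l) (hlL : l ∈ L)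
    {Γ : Set (Set α)} {hs : List α} {h : α} (hrule : ∀ d : Set α, (∀ h' ∈ hs, h' ∉ d) → h ∉ l d)
    (hprems : ∀ h' ∈ hs, ExplainsRemoval L R (Γ, h')) : ExplainsRemoval L R (Γ, h) :=
  fun e he hmem => hrule _ (fun h' hh' => hprems h' hh' e he)
    (CL_subset_apply_of_monotone hl (Or.inl hlL) hmem)

theorem explainsRemoval_of_restriction_rule {r : Set α → Set α} (hr : ∀ e e' : Set α, r e = r e')
    (hrR : r ∈ R) {d : Set α} {h : α} (hh : h ∉ r Set.univ) : ExplainsRemoval L R ({d}, h) := by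
  rintro e rfl hmem
  exact hh (CL_subset_apply_univ_of_const hr (Or.inr hrR) hmem)

theorem explainsRemoval_of_labeling_rule {h : α} {Γs : List (Set (Set α))}
    (hprems : ∀ Γ ∈ Γs, ExplainsRemoval L R (Γ, h)) :
    ExplainsRemoval L R ({e | ∃ Γ ∈ Γs, e ∈ Γ}, h) := by
  rintro e ⟨Γ, hΓ, he⟩
  exact hprems Γ hΓ e he

theorem explainsRemoval_of_mem_ruleSystem (hL : ∀ f ∈ L, Monotone f)
    (hR : ∀ r ∈ R, ∀ e e' : Set α, r e = r e') {prems : List (Judgment α)} {concl : Judgment α}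
    (hrule : (prems, concl) ∈ RuleSystem L R) (hprems : ∀ j ∈ prems, ExplainsRemoval L R j) :
    ExplainsRemoval L R concl := by
  rcases hrule with ⟨l, hlL, Γ, hs, h, hrule, hl⟩ | ⟨r, hrR, d, h, hrule, hh, -⟩ |
      ⟨h, Γs, -, hrule⟩ <;> simp only [Prod.mk.injEq] at hrule <;> obtain ⟨rfl, rfl⟩ := hrule
  · exact explainsRemoval_of_consistency_rule (hL l hlL) hlL hl
      fun h' hh' => hprems _ (List.mem_map_of_mem hh')
  · exact explainsRemoval_of_restriction_rule (hR r hrR) hrR hh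
  · exact explainsRemoval_of_labeling_rule fun Γ hΓ => hprems _ (List.mem_map_of_mem hΓ)

end Soundness

theorem explanation_soundness_general {α : Type*}
    (L R : Set (Set α → Set α))
    (hL : ∀ f ∈ L, Monotone f)
    (hR : ∀ r ∈ R, ∀ e e' : Set α, r e = r e')
    (Γ : Set (Set α)) (h : α)
    (hder : Derives (RuleSystem L R) (Γ, h)) :
    ∀ e ∈ Γ, h ∉ CL e (L ∪ R) :=
  hder.of_rules_preserve fun _ _ => explainsRemoval_of_mem_ruleSystem hL hR

theorem explanation_soundness {α : Type*} [Finite α]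
    (L R : Set (Set α → Set α))
    (hL : ∀ f ∈ L, Monotone f)
    (hR : ∀ r ∈ R, ∀ e e' : Set α, r e = r e')
    (Γ : Set (Set α)) (h : α)
    (hder : Derives (RuleSystem L R) (Γ, h)) :
    ∀ e ∈ Γ, h ∉ CL e (L ∪ R) :=
  explanation_soundness_general L R hL hR Γ h hder
end
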